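/- The kernel of the Dirac operator encodes the Betti numbers of all degrees: assuming d₁ ∘ d₂ = 0, finrank(ker D) = β₀ + β₁ + β₂, where β₀ = finrank(V₀ ⧸ range d₁), β₁ = finrank((ker d₁) ⧸ (range d₂)), and β₂ = finrank(ker d₂). -/

import Mathlib

/-!
Because `d₁ ∘ d₂ = 0`, the equation `D(x, y, z) = 0` decouples: `ker D` is the product of the
harmonic spaces `(range d₁)ᗮ`, `ker d₁ ⊓ (range d₂)ᗮ` and `ker d₂`. Each orthogonal complement is a
complement of the subspace being quotiented out, so it has the dimension of that quotient.
-/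

open scoped RealInnerProductSpace

/-- The combinatorial Dirac operator on `V₀ ⊕ V₁ ⊕ V₂` as a linear map:
`D(x, y, z) = (d₁ y, d₁† x + d₂ z, d₂† y)`. -/
noncomputable def diracMap {V₀ V₁ V₂ : Type*}
    [NormedAddCommGroup V₀] [InnerProductSpace ℝ V₀] [FiniteDimensional ℝ V₀]
    [NormedAddCommGroup V₁] [InnerProductSpace ℝ V₁] [FiniteDimensional ℝ V₁]
    [NormedAddCommGroup V₂] [InnerProductSpace ℝ V₂] [FiniteDimensional ℝ V₂]
    (d₁ : V₁ →ₗ[ℝ] V₀) (d₂ : V₂ →ₗ[ℝ] V₁) :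
    (V₀ × V₁ × V₂) →ₗ[ℝ] V₀ × V₁ × V₂ :=
  LinearMap.prod
    (d₁ ∘ₗ (LinearMap.fst ℝ V₁ V₂ ∘ₗ LinearMap.snd ℝ V₀ (V₁ × V₂)))
    (LinearMap.prod
      (LinearMap.adjoint d₁ ∘ₗ LinearMap.fst ℝ V₀ (V₁ × V₂)
        + d₂ ∘ₗ (LinearMap.snd ℝ V₁ V₂ ∘ₗ LinearMap.snd ℝ V₀ (V₁ × V₂)))
      (LinearMap.adjoint d₂ ∘ₗ (LinearMap.fst ℝ V₁ V₂ ∘ₗ LinearMap.snd ℝ V₀ (V₁ × V₂))))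

open Module LinearMap

lemma Submodule.finrank_prod {K M N : Type*} [Field K]
    [AddCommGroup M] [Module K M] [FiniteDimensional K M]
    [AddCommGroup N] [Module K N] [FiniteDimensional K N]
    (p : Submodule K M) (q : Submodule K N) :
    finrank K (p.prod q) = finrank K p + finrank K q := by
  have hrange : p.prod q = range (p.subtype.prodMap q.subtype) := by
    rw [range_prodMap, Submodule.range_subtype, Submodule.range_subtype]
  rw [hrange, finrank_range_of_inj (p.injective_subtype.prodMap q.injective_subtype),
    Module.finrank_prod]

section Orthogonal

variable {𝕜 E : Type*} [RCLike 𝕜] [NormedAddCommGroup E] [InnerProductSpace 𝕜 E]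
  [FiniteDimensional 𝕜 E]

lemma Submodule.finrank_orthogonal_eq_finrank_quotient (K : Submodule 𝕜 E) :
    finrank 𝕜 Kᗮ = finrank 𝕜 (E ⧸ K) :=
  (K.quotientEquivOfIsCompl Kᗮ K.isCompl_orthogonal).finrank_eq.symm

lemma Submodule.finrank_inf_orthogonal_eq_finrank_quotient {K H : Submodule 𝕜 E} (hKH : K ≤ H) :
    finrank 𝕜 (H ⊓ Kᗮ : Submodule 𝕜 E) = finrank 𝕜 (H ⧸ K.comap H.subtype) := by
  have hsplit := Submodule.finrank_add_inf_finrank_orthogonal hKH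
  have hquot := Submodule.finrank_quotient_add_finrank (K.comap H.subtype)
  have hcomap : finrank 𝕜 (K.comap H.subtype) = finrank 𝕜 K :=
    (Submodule.comapSubtypeEquivOfLe hKH).finrank_eq
  rw [inf_comm]
  omega

end Orthogonal

lemma ker_diracMap {V₀ V₁ V₂ : Type*}
    [NormedAddCommGroup V₀] [InnerProductSpace ℝ V₀] [FiniteDimensional ℝ V₀]
    [NormedAddCommGroup V₁] [InnerProductSpace ℝ V₁] [FiniteDimensional ℝ V₁]
    [NormedAddCommGroup V₂] [InnerProductSpace ℝ V₂] [FiniteDimensional ℝ V₂]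
    (d₁ : V₁ →ₗ[ℝ] V₀) (d₂ : V₂ →ₗ[ℝ] V₁) (hc : d₁ ∘ₗ d₂ = 0) :
    ker (diracMap d₁ d₂)
      = (range d₁)ᗮ.prod ((ker d₁ ⊓ (range d₂)ᗮ : Submodule ℝ V₁).prod (ker d₂)) := by
  ext ⟨x, y, z⟩
  simp only [diracMap, orthogonal_range, mem_ker, prod_apply, Function.prod, comp_apply,
    LinearMap.add_apply, fst_apply, snd_apply, Prod.mk_eq_zero, Submodule.mem_prod,
    Submodule.mem_inf]
  constructor
  · rintro ⟨hy₁, hxz, hy₂⟩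
    -- applying `d₁` to `d₁† x + d₂ z = 0` kills `d₂ z`, and `ker (d₁ d₁†) = ker d₁†`
    have hx : adjoint d₁ x = 0 := by
      have hdd : d₁ (d₂ z) = 0 := congr($hc z)
      have : d₁ (adjoint d₁ x) = 0 := by simpa [hdd] using congr(d₁ $hxz)
      rwa [← mem_ker, ← ker_self_comp_adjoint]
    exact ⟨hx, ⟨hy₁, hy₂⟩, by simpa [hx] using hxz⟩
  · rintro ⟨hx, ⟨hy₁, hy₂⟩, hz⟩
    exact ⟨hy₁, by rw [hx, hz, add_zero], hy₂⟩

/-- The kernel of the Dirac operator encodes the Betti numbers of all degrees: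
if `d₁ ∘ d₂ = 0` then `dim ker D = β₀ + β₁ + β₂`. -/
theorem dirac_ker_finrank {V₀ V₁ V₂ : Type*}
    [NormedAddCommGroup V₀] [InnerProductSpace ℝ V₀] [FiniteDimensional ℝ V₀]
    [NormedAddCommGroup V₁] [InnerProductSpace ℝ V₁] [FiniteDimensional ℝ V₁]
    [NormedAddCommGroup V₂] [InnerProductSpace ℝ V₂] [FiniteDimensional ℝ V₂]
    (d₁ : V₁ →ₗ[ℝ] V₀) (d₂ : V₂ →ₗ[ℝ] V₁) (hc : d₁ ∘ₗ d₂ = 0) :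
    Module.finrank ℝ ↥(LinearMap.ker (diracMap d₁ d₂))
      = Module.finrank ℝ (V₀ ⧸ LinearMap.range d₁)
        + Module.finrank ℝ
            (↥(LinearMap.ker d₁) ⧸
              Submodule.comap (LinearMap.ker d₁).subtype (LinearMap.range d₂))
        + Module.finrank ℝ ↥(LinearMap.ker d₂) := by
  rw [ker_diracMap d₁ d₂ hc, Submodule.finrank_prod, Submodule.finrank_prod,
    Submodule.finrank_orthogonal_eq_finrank_quotient,
    Submodule.finrank_inf_orthogonal_eq_finrank_quotient (range_le_ker_iff.mpr hc), add_assoc]
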